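/- arXiv:1706.03276 — 3 statements merged into one kernel-verified Lean document; each statement's English description precedes it below -/
import Mathlib

section
/- Let G = (X, +, ≤) be an ordered group whose order is a semiorder, let A(G) := {x ∈ X : ℤx is an antichain}, and let I(G)(0) be the connected component of 0 in the incomparability graph of (X, ≤). If H is a convex subgroup of G, then either H ⊆ A(G), in which case H is an antichain, or I(G)(0) ⊆ H. Moreover, if I(G)(0) ⊆ H and H is a normal subgroup of G, then the quotient group G/H with the image order is totally ordered and G is the lexicographical sum of the cosets of H: for x, y in distinct cosets of H, x < y iff x + H < y + H. -/
namespace ThrPaper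

universe u

variable {X : Type*}

/-- The strict order associated to a reflexive relation `le`. -/
def Lt (le : X → X → Prop) (x y : X) : Prop := le x y ∧ ¬ le y x

/-- `x` and `y` are incomparable with respect to `le`. -/
def Incomp (le : X → X → Prop) (x y : X) : Prop := ¬ le x y ∧ ¬ le y x

/-- `le` is a partial order (reflexive, transitive, antisymmetric). -/
def IsPartialOrderRel (le : X → X → Prop) : Prop :=
  (∀ x, le x x) ∧ (∀ x y z, le x y → le y z → le x z) ∧ ∀ x y, le x y → le y x → x = y

/-- `le` is total. -/
def IsTotalRel (le : X → X → Prop) : Prop := ∀ x y, le x y ∨ le y x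

/-- Compatibility of a relation with the (not necessarily abelian) group operation. -/
def IsCompat {G : Type*} [AddGroup G] (le : G → G → Prop) : Prop :=
  ∀ a b x y : G, le x y → le (a + x + b) (a + y + b)

/-- The trace quasi-order `≤_pred`: `x ≤_pred y` iff every `z < x` satisfies `z < y`. -/
def PredLe (le : X → X → Prop) (x y : X) : Prop := ∀ z, Lt le z x → Lt le z y

/-- The trace quasi-order `≤_succ`: `x ≤_succ y` iff every `z > y` satisfies `z > x`. -/
def SuccLe (le : X → X → Prop) (x y : X) : Prop := ∀ z, Lt le y z → Lt le x z

/-- `le` is a threshold order: `≤_pred` and `≤_succ` are equal and are total orders. -/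
def IsThresholdOrder (le : X → X → Prop) : Prop :=
  (∀ x y, PredLe le x y ↔ SuccLe le x y) ∧
  (∀ x y, PredLe le x y ∨ PredLe le y x) ∧
  ∀ x y, PredLe le x y → PredLe le y x → x = y

/-- The poset `2 ⊕ 2` embeds into `le`. -/
def Embeds2p2 (le : X → X → Prop) : Prop :=
  ∃ a b c d : X, Lt le a b ∧ Lt le c d ∧
    Incomp le a c ∧ Incomp le a d ∧ Incomp le b c ∧ Incomp le b d

/-- The poset `3 ⊕ 1` embeds into `le`. -/
def Embeds3p1 (le : X → X → Prop) : Prop :=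
  ∃ a b c d : X, Lt le a b ∧ Lt le b c ∧ Incomp le d a ∧ Incomp le d b ∧ Incomp le d c

/-- The poset `1 ⊕ 2` embeds into `le`. -/
def Embeds1p2 (le : X → X → Prop) : Prop :=
  ∃ a b c : X, Lt le a b ∧ Incomp le c a ∧ Incomp le c b

/-- The image of a relation `r` on a group `H` under the quotient map `H → H ⧸ K`:
`α ≤ β` iff `a ≤ b` for some representatives `a ∈ α`, `b ∈ β`. -/
def imageRel {H : Type*} [AddGroup H] (K : AddSubgroup H) (r : H → H → Prop) :
    H ⧸ K → H ⧸ K → Prop := fun α β =>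
  ∃ a b : H, (QuotientAddGroup.mk a : H ⧸ K) = α ∧ (QuotientAddGroup.mk b : H ⧸ K) = β ∧ r a b


/-!
A strictly positive `g` in a convex subgroup `H` traps every incomparability step: since a
semiorder has no `3 ⊕ 1`, anything incomparable to `x` lies between `x - g - g` and `x + g + g`,
so convexity carries membership in `H` along the incomparability component of `0`. An element of
`H` outside `A(G)` has two distinct comparable multiples, whose difference is such a `g`; and if
`H ⊆ A(G)`, distinct `x, y ∈ H` are incomparable because `0` and `-x + y` are. Once `H` contains the component of `0`, elements of distinct cosets are comparable,
and convexity of the cosets forces all such comparisons between two cosets to point the same way,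
which makes the image order on `G ⧸ H` a total order that determines `<` across cosets.
-/

section Order

variable {X : Type*} {le : X → X → Prop}

theorem Incomp.symm {x y : X} (h : Incomp le x y) : Incomp le y x := ⟨h.2, h.1⟩

theorem lt_of_le_of_ne_of_antisymm (hanti : ∀ x y, le x y → le y x → x = y) {x y : X}
    (hle : le x y) (hne : x ≠ y) : Lt le x y :=
  ⟨hle, fun hyx => hne (hanti x y hle hyx)⟩

theorem le_of_incomp_of_lt_of_lt (htrans : ∀ x y z, le x y → le y z → le x z)
    (h31 : ¬ Embeds3p1 le) {a b c y : X} (hab : Lt le a b) (hbc : Lt le b c)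
    (hya : Incomp le y a) : le y c := by
  by_contra hyc
  have hby : ¬ le b y := fun h => hya.2 (htrans _ _ _ hab.1 h)
  have hcy : ¬ le c y := fun h => hby (htrans _ _ _ hbc.1 h)
  have hyb : ¬ le y b := fun h => hyc (htrans _ _ _ h hbc.1)
  exact h31 ⟨a, b, c, y, hab, hbc, hya, ⟨hyb, hby⟩, ⟨hyc, hcy⟩⟩

theorem le_of_lt_of_lt_of_incomp (htrans : ∀ x y z, le x y → le y z → le x z)
    (h31 : ¬ Embeds3p1 le) {a b c y : X} (hab : Lt le a b) (hbc : Lt le b c)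
    (hyc : Incomp le y c) : le a y := by
  by_contra hay
  have hyb : ¬ le y b := fun h => hyc.1 (htrans _ _ _ h hbc.1)
  have hya : ¬ le y a := fun h => hyb (htrans _ _ _ h hab.1)
  have hby : ¬ le b y := fun h => hay (htrans _ _ _ hab.1 h)
  exact h31 ⟨a, b, c, y, hab, hbc, ⟨hya, hay⟩, ⟨hyb, hby⟩, hyc⟩

/-- The paper's `I(G)(x)`. -/
def incompComponent (le : X → X → Prop) (x : X) : Set X :=
  {y | Relation.ReflTransGen (Incomp le) x y}

end Order

section Group

variable {G : Type*} [AddGroup G] {le : G → G → Prop}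

/-- The paper's `A(G)`. -/
def antichainGenerators (le : G → G → Prop) : Set G :=
  {x | ∀ m n : ℤ, m • x ≠ n • x → Incomp le (m • x) (n • x)}

def IsConvexSubgroup (le : G → G → Prop) (H : AddSubgroup G) : Prop :=
  ∀ x y z : G, x ∈ H → y ∈ H → le x z → le z y → z ∈ H

theorem IsCompat.le_add_left_iff (hc : IsCompat le) (a : G) {x y : G} :
    le (a + x) (a + y) ↔ le x y := by
  refine ⟨fun h => ?_, fun h => by simpa using hc a 0 x y h⟩
  simpa [add_assoc] using hc (-a) 0 _ _ h

theorem IsCompat.lt_add_left_iff (hc : IsCompat le) (a : G) {x y : G} :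
    Lt le (a + x) (a + y) ↔ Lt le x y := by
  simp only [Lt, hc.le_add_left_iff]

theorem IsCompat.incomp_add_left_iff (hc : IsCompat le) (a : G) {x y : G} :
    Incomp le (a + x) (a + y) ↔ Incomp le x y := by
  simp only [Incomp, hc.le_add_left_iff]

theorem IsCompat.le_iff_zero_le_neg_add (hc : IsCompat le) {x y : G} :
    le x y ↔ le 0 (-x + y) := by
  rw [← hc.le_add_left_iff (-x), neg_add_cancel]

theorem IsCompat.lt_add_of_pos (hc : IsCompat le) {g : G} (hg : Lt le 0 g) (x : G) :
    Lt le x (x + g) := by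
  simpa using (hc.lt_add_left_iff x).2 hg

theorem incomp_of_subset_antichainGenerators (hc : IsCompat le) {H : AddSubgroup G}
    (hA : (H : Set G) ⊆ antichainGenerators le) {x y : G} (hx : x ∈ H) (hy : y ∈ H)
    (hne : x ≠ y) : Incomp le x y := by
  have hz : -x + y ∈ H := H.add_mem (H.neg_mem hx) hy
  have hz0 : (0 : ℤ) • (-x + y) ≠ (1 : ℤ) • (-x + y) := by
    simpa [eq_comm, neg_add_eq_zero] using hne
  have h0z : Incomp le 0 (-x + y) := by simpa using hA hz 0 1 hz0
  simpa using (hc.incomp_add_left_iff x).2 h0z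

theorem exists_pos_mem_of_not_subset_antichainGenerators (hc : IsCompat le)
    (hanti : ∀ x y, le x y → le y x → x = y) {H : AddSubgroup G}
    (hA : ¬ (H : Set G) ⊆ antichainGenerators le) : ∃ g ∈ H, Lt le 0 g := by
  have pos_of_le : ∀ u ∈ H, ∀ v ∈ H, u ≠ v → le u v → ∃ g ∈ H, Lt le 0 g :=
    fun u hu v hv hne huv => ⟨-u + v, H.add_mem (H.neg_mem hu) hv, by
      simpa using (hc.lt_add_left_iff (-u)).2 (lt_of_le_of_ne_of_antisymm hanti huv hne)⟩
  obtain ⟨a, ha, hna⟩ := Set.not_subset.mp hA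
  obtain ⟨m, n, hmn, hcomp⟩ : ∃ m n : ℤ, m • a ≠ n • a ∧ ¬ Incomp le (m • a) (n • a) := by
    simpa [antichainGenerators] using hna
  rcases not_and_or.mp hcomp with h | h
  · exact pos_of_le _ (H.zsmul_mem ha m) _ (H.zsmul_mem ha n) hmn (not_not.mp h)
  · exact pos_of_le _ (H.zsmul_mem ha n) _ (H.zsmul_mem ha m) hmn.symm (not_not.mp h)

theorem incompComponent_subset_of_pos_mem (hc : IsCompat le)
    (htrans : ∀ x y z, le x y → le y z → le x z) (h31 : ¬ Embeds3p1 le)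
    {H : AddSubgroup G} (hconv : IsConvexSubgroup le H) {g : G} (hgH : g ∈ H)
    (hg : Lt le 0 g) {x : G} (hx : x ∈ H) : incompComponent le x ⊆ H := by
  have lt_sub : ∀ y : G, Lt le (y - g) y := fun y => by
    simpa using hc.lt_add_of_pos hg (y - g)
  intro z hz
  induction hz with
  | refl => exact hx
  | tail _ hyz ih =>
    rename_i y z _
    refine hconv (y - g - g) (y + g + g) z
      (H.sub_mem (H.sub_mem ih hgH) hgH) (H.add_mem (H.add_mem ih hgH) hgH) ?_ ?_
    · exact le_of_lt_of_lt_of_incomp htrans h31 (lt_sub _) (lt_sub _) hyz.symm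
    · exact le_of_incomp_of_lt_of_lt htrans h31 (hc.lt_add_of_pos hg _)
        (hc.lt_add_of_pos hg _) hyz.symm

section Quotient

variable {H : AddSubgroup G}

theorem IsConvexSubgroup.mk_eq_of_le_of_le (hconv : IsConvexSubgroup le H) (hc : IsCompat le)
    {x y z : G} (hxy : (x : G ⧸ H) = y) (hxz : le x z) (hzy : le z y) :
    (z : G ⧸ H) = x := by
  refine (QuotientAddGroup.eq.mpr (hconv 0 (-x + y) (-x + z) H.zero_mem
    (QuotientAddGroup.eq.mp hxy) ?_ ?_)).symm
  · exact hc.le_iff_zero_le_neg_add.mp hxz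
  · exact (hc.le_add_left_iff (-x)).2 hzy

theorem mk_eq_of_incomp (hc : IsCompat le) (hI : incompComponent le 0 ⊆ H) {x y : G}
    (h : Incomp le x y) : (x : G ⧸ H) = y := by
  refine QuotientAddGroup.eq.mpr (hI (Relation.ReflTransGen.single ?_))
  simpa using (hc.incomp_add_left_iff (-x)).2 h

theorem le_or_le_of_mk_ne (hc : IsCompat le) (hI : incompComponent le 0 ⊆ H) {x y : G}
    (hne : (x : G ⧸ H) ≠ y) : le x y ∨ le y x := by
  by_contra h
  exact hne (mk_eq_of_incomp hc hI (not_or.mp h))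

theorem le_of_le_of_mk_eq (hc : IsCompat le) (hconv : IsConvexSubgroup le H)
    (hI : incompComponent le 0 ⊆ H) {x y x' y' : G} (hne : (x : G ⧸ H) ≠ y)
    (hxy : le x y) (hx : (x' : G ⧸ H) = x) (hy : (y' : G ⧸ H) = y) : le x' y' := by
  by_contra hxy'
  have hy'x' : le y' x' :=
    (le_or_le_of_mk_ne hc hI (by rwa [hx, hy] : (x' : G ⧸ H) ≠ y')).resolve_left hxy'
  rcases le_or_le_of_mk_ne hc hI (by rwa [hy] : (x : G ⧸ H) ≠ y') with hxy' | hy'x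
  · exact hne (by rw [← hy, hconv.mk_eq_of_le_of_le hc hx.symm hxy' hy'x'])
  · exact hne (by rw [hconv.mk_eq_of_le_of_le hc hy hy'x hxy, hy])

theorem imageRel_mk_iff (hc : IsCompat le) (hconv : IsConvexSubgroup le H)
    (hI : incompComponent le 0 ⊆ H) {x y : G} (hne : (x : G ⧸ H) ≠ y) :
    imageRel H le x y ↔ le x y :=
  ⟨fun ⟨_, _, ha, hb, hab⟩ =>
    le_of_le_of_mk_eq hc hconv hI (by rwa [ha, hb]) hab ha.symm hb.symm,
   fun h => ⟨x, y, rfl, rfl, h⟩⟩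

theorem imageRel_refl (hrefl : ∀ x, le x x) (α : G ⧸ H) : imageRel H le α α := by
  obtain ⟨a, rfl⟩ := QuotientAddGroup.mk_surjective α
  exact ⟨a, a, rfl, rfl, hrefl a⟩

theorem isPartialOrderRel_imageRel (hpo : IsPartialOrderRel le) (hc : IsCompat le)
    (hconv : IsConvexSubgroup le H) (hI : incompComponent le 0 ⊆ H) :
    IsPartialOrderRel (imageRel H le) := by
  obtain ⟨hrefl, htrans, hanti⟩ := hpo
  have hiff := fun {x y : G} => imageRel_mk_iff (x := x) (y := y) hc hconv hI
  refine ⟨imageRel_refl hrefl, fun α β γ => ?_, fun α β => ?_⟩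
  · obtain ⟨a, rfl⟩ := QuotientAddGroup.mk_surjective α
    obtain ⟨b, rfl⟩ := QuotientAddGroup.mk_surjective β
    obtain ⟨c, rfl⟩ := QuotientAddGroup.mk_surjective γ
    intro hab hbc
    by_cases hac : (a : G ⧸ H) = c
    · exact hac ▸ imageRel_refl hrefl _
    by_cases hab' : (a : G ⧸ H) = b
    · exact hab' ▸ hbc
    by_cases hbc' : (b : G ⧸ H) = c
    · exact hbc' ▸ hab
    exact (hiff hac).2 (htrans a b c ((hiff hab').1 hab) ((hiff hbc').1 hbc))
  · obtain ⟨a, rfl⟩ := QuotientAddGroup.mk_surjective α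
    obtain ⟨b, rfl⟩ := QuotientAddGroup.mk_surjective β
    intro hab hba
    by_contra hne
    exact hne (congrArg _ (hanti a b ((hiff hne).1 hab) ((hiff (Ne.symm hne)).1 hba)))

theorem isTotalRel_imageRel (hrefl : ∀ x, le x x) (hc : IsCompat le)
    (hI : incompComponent le 0 ⊆ H) : IsTotalRel (imageRel H le) := by
  intro α β
  obtain ⟨a, rfl⟩ := QuotientAddGroup.mk_surjective α
  obtain ⟨b, rfl⟩ := QuotientAddGroup.mk_surjective β
  by_cases hab : (a : G ⧸ H) = b
  · exact Or.inl (hab ▸ imageRel_refl hrefl _)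
  rcases le_or_le_of_mk_ne hc hI hab with h | h
  · exact Or.inl ⟨a, b, rfl, rfl, h⟩
  · exact Or.inr ⟨b, a, rfl, rfl, h⟩

theorem lt_iff_imageRel_lt (hc : IsCompat le) (hconv : IsConvexSubgroup le H)
    (hI : incompComponent le 0 ⊆ H) {x y : G} (hne : (x : G ⧸ H) ≠ y) :
    Lt le x y ↔ Lt (imageRel H le) x y := by
  simp only [Lt, imageRel_mk_iff hc hconv hI hne, imageRel_mk_iff hc hconv hI (Ne.symm hne)]

end Quotient

end Group

/-- Let `G` be an ordered group whose order is a semiorder and let `H`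
be a convex subgroup. Then either `H ⊆ A(G)` (in which case `H` is an antichain) or
`I(G)(0) ⊆ H`; and if the latter holds and `H` is normal, then `G/H` with the image order
is totally ordered and `G` is the lexicographical sum of the cosets of `H`. -/
theorem convex_subgroup_of_semiordered_group {G : Type*} [AddGroup G] (le : G → G → Prop)
    (hpo : IsPartialOrderRel le) (hc : IsCompat le)
    (hsemi : ¬ Embeds2p2 le ∧ ¬ Embeds3p1 le)
    (H : AddSubgroup G)
    (hconv : ∀ x y z : G, x ∈ H → y ∈ H → le x z → le z y → z ∈ H) :
    -- either `H ⊆ A(G)`, in which case `H` is an antichain, or `I(G)(0) ⊆ H`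
    (((H : Set G) ⊆ {x : G | ∀ m n : ℤ, m • x ≠ n • x → Incomp le (m • x) (n • x)} ∧
        ∀ x ∈ H, ∀ y ∈ H, x ≠ y → Incomp le x y) ∨
      {x : G | Relation.ReflTransGen (fun a b => Incomp le a b) 0 x} ⊆ (H : Set G)) ∧
    -- if moreover `I(G)(0) ⊆ H` and `H` is normal, the quotient `G/H` is totally
    -- ordered and `G` is the lexicographical sum of the cosets of `H`
    ({x : G | Relation.ReflTransGen (fun a b => Incomp le a b) 0 x} ⊆ (H : Set G) →
      H.Normal →
      IsPartialOrderRel (imageRel H le) ∧ IsTotalRel (imageRel H le) ∧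
      ∀ x y : G, (QuotientAddGroup.mk x : G ⧸ H) ≠ QuotientAddGroup.mk y →
        (Lt le x y ↔
          Lt (imageRel H le) (QuotientAddGroup.mk x) (QuotientAddGroup.mk y))) := by
  refine ⟨?_, fun hI _ => ?_⟩
  · by_cases hA : (H : Set G) ⊆ antichainGenerators le
    · exact Or.inl ⟨hA, fun x hx y hy => incomp_of_subset_antichainGenerators hc hA hx hy⟩
    · obtain ⟨g, hgH, hg⟩ := exists_pos_mem_of_not_subset_antichainGenerators hc hpo.2.2 hA
      exact Or.inr (incompComponent_subset_of_pos_mem hc hpo.2.1 hsemi.2 hconv hgH hg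
        H.zero_mem)
  · exact ⟨isPartialOrderRel_imageRel hpo hc hconv hI, isTotalRel_imageRel hpo.1 hc hI,
      fun x y => lt_iff_imageRel_lt hc hconv hI⟩

end ThrPaper
end

section
/- For a (not necessarily abelian) group G the following are equivalent: (i) G can be endowed with a compatible partial order which is a semiorder and is distinct from the equality relation; (ii) G can be endowed with a compatible partial order which is a weak order and is distinct from the equality relation; (iii) G has a proper normal subgroup H such that the quotient group G/H admits a compatible total order. -/
/-!
Let `≤` be a compatible interval order on `G` that is not equality. Its predecessor trace
`x ≼ y :↔ ∀ z < x, z < y` is a compatible preorder, total because `2 ⊕ 2` does not embed, and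
`x < y` forces `¬ y ≼ x`. The `≼`-class of `0` is then a proper normal subgroup `H`, and `≼`
descends to a compatible total order on `G ⧸ H`. Conversely, pulling back the strict order of
`G ⧸ H` and adding equality gives a compatible weak order on `G` (elements are incomparable
exactly when they lie in the same coset), and a weak order is a semiorder since `1 ⊕ 2` embeds
in both `2 ⊕ 2` and `3 ⊕ 1`.
-/

namespace ThrPaper

universe u

variable {X : Type*}

theorem Lt.ne {le : X → X → Prop} {x y : X} (h : Lt le x y) : x ≠ y := by
  rintro rfl
  exact h.2 h.1

theorem Embeds2p2.embeds1p2 {le : X → X → Prop} : Embeds2p2 le → Embeds1p2 le :=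
  fun ⟨a, b, c, _, hab, _, hac, _, hbc, _⟩ => ⟨a, b, c, hab, ⟨hac.2, hac.1⟩, ⟨hbc.2, hbc.1⟩⟩

theorem Embeds3p1.embeds1p2 {le : X → X → Prop} : Embeds3p1 le → Embeds1p2 le :=
  fun ⟨a, b, _, d, hab, _, hda, hdb, _⟩ => ⟨a, b, d, hab, hda, hdb⟩

namespace IsPartialOrderRel

variable {le : X → X → Prop} {x y z : X}

theorem lt_of_le_of_lt (hpo : IsPartialOrderRel le) (h : le x y) (h' : Lt le y z) :
    Lt le x z :=
  ⟨hpo.2.1 _ _ _ h h'.1, fun hzx => h'.2 (hpo.2.1 _ _ _ hzx h)⟩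

theorem lt_of_lt_of_le (hpo : IsPartialOrderRel le) (h : Lt le x y) (h' : le y z) :
    Lt le x z :=
  ⟨hpo.2.1 _ _ _ h.1 h', fun hzx => h.2 (hpo.2.1 _ _ _ h' hzx)⟩

theorem lt_trans (hpo : IsPartialOrderRel le) (h : Lt le x y) (h' : Lt le y z) : Lt le x z :=
  hpo.lt_of_le_of_lt h.1 h'

theorem lt_of_le_of_ne (hpo : IsPartialOrderRel le) (h : le x y) (hne : x ≠ y) : Lt le x y :=
  ⟨h, fun h' => hne (hpo.2.2 _ _ h h')⟩

theorem lt_or_eq_or_lt (hpo : IsPartialOrderRel le) (htot : IsTotalRel le) (x y : X) :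
    Lt le x y ∨ x = y ∨ Lt le y x := by
  by_cases hxy : x = y
  · exact Or.inr (Or.inl hxy)
  rcases htot x y with h | h
  · exact Or.inl (hpo.lt_of_le_of_ne h hxy)
  · exact Or.inr (Or.inr (hpo.lt_of_le_of_ne h (Ne.symm hxy)))

end IsPartialOrderRel

section PredLe

variable {le : X → X → Prop}

theorem predLe_trans (x y z : X) :
    PredLe le x y → PredLe le y z → PredLe le x z :=
  fun hxy hyz w hw => hyz w (hxy w hw)

theorem not_predLe_of_lt {x y : X} (h : Lt le x y) : ¬ PredLe le y x :=
  fun hyx => (hyx x h).ne rfl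

theorem predLe_total (hpo : IsPartialOrderRel le) (h22 : ¬ Embeds2p2 le) :
    IsTotalRel (PredLe le) := by
  have incomp : ∀ {x y a c}, Lt le a x → ¬ Lt le a y → Lt le c y → ¬ Lt le c x →
      ¬ le a c ∧ ¬ le a y ∧ ¬ le y a ∧ ¬ le x y := by
    intro x y a c hax hay hcy hcx
    refine ⟨fun h => hay (hpo.lt_of_le_of_lt h hcy), fun h => ?_,
      fun h => hcx (hpo.lt_trans hcy (hpo.lt_of_le_of_lt h hax)),
      fun h => hay (hpo.lt_of_lt_of_le hax h)⟩
    obtain rfl : a = y := by_contra fun hne => hay (hpo.lt_of_le_of_ne h hne)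
    exact hcx (hpo.lt_trans hcy hax)
  intro x y
  by_contra hxy
  simp only [PredLe, not_or, not_forall] at hxy
  obtain ⟨⟨a, hax, hay⟩, ⟨c, hcy, hcx⟩⟩ := hxy
  obtain ⟨hac, hay', hya, hxy⟩ := incomp hax hay hcy hcx
  obtain ⟨hca, hcx', hxc, hyx⟩ := incomp hcy hcx hax hay
  exact h22 ⟨a, x, c, y, hax, hcy, ⟨hac, hca⟩, ⟨hay', hya⟩, ⟨hxc, hcx'⟩, ⟨hxy, hyx⟩⟩

end PredLe

section ReflGen

open Relation

theorem isPartialOrderRel_reflGen {s : X → X → Prop} (hirr : ∀ x, ¬ s x x)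
    (htrans : ∀ x y z, s x y → s y z → s x z) : IsPartialOrderRel (ReflGen s) := by
  refine ⟨fun _ => .refl, ?_, ?_⟩
  · rintro x y z (_ | hxy) (_ | hyz)
    exacts [.refl, .single hyz, .single hxy, .single (htrans _ _ _ hxy hyz)]
  · rintro x y (_ | hxy) (_ | hyx)
    exacts [rfl, rfl, rfl, (hirr x (htrans _ _ _ hxy hyx)).elim]

variable {Y : Type*} {r : Y → Y → Prop}

theorem not_embeds1p2_reflGen_preimage_lt (hr : IsPartialOrderRel r) (htot : IsTotalRel r)
    (f : X → Y) : ¬ Embeds1p2 (ReflGen (f ⁻¹'o Lt r)) := by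
  have eq_of_incomp : ∀ {x y}, Incomp (ReflGen (f ⁻¹'o Lt r)) x y → f x = f y := by
    rintro x y ⟨hxy, hyx⟩
    rcases hr.lt_or_eq_or_lt htot (f x) (f y) with h | h | h
    exacts [(hxy (.single h)).elim, h, (hyx (.single h)).elim]
  rintro ⟨a, b, c, ⟨hab, hba⟩, hca, hcb⟩
  rcases hab with _ | hab
  · exact hba .refl
  · exact Lt.ne hab ((eq_of_incomp hca).symm.trans (eq_of_incomp hcb))

end ReflGen

section Group

open Relation

variable {G K : Type*} [AddGroup G] [AddGroup K]

variable (G) in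
def HasCompatSemiorder : Prop :=
  ∃ le : G → G → Prop, IsPartialOrderRel le ∧ IsCompat le ∧
    ¬ Embeds2p2 le ∧ ¬ Embeds3p1 le ∧ ∃ x y : G, x ≠ y ∧ le x y

variable (G) in
def HasCompatWeakOrder : Prop :=
  ∃ le : G → G → Prop, IsPartialOrderRel le ∧ IsCompat le ∧
    ¬ Embeds1p2 le ∧ ∃ x y : G, x ≠ y ∧ le x y

variable (G) in
def HasTotallyOrderableProperQuotient : Prop :=
  ∃ (H : AddSubgroup G) (hN : H.Normal), H ≠ ⊤ ∧
    ∃ r : G ⧸ H → G ⧸ H → Prop,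
      IsPartialOrderRel r ∧ IsTotalRel r ∧
      @IsCompat (G ⧸ H) (@QuotientAddGroup.Quotient.addGroup G _ H hN) r

namespace IsCompat

variable {le : G → G → Prop} {x y : G}

theorem add_left (hc : IsCompat le) (a : G) (h : le x y) : le (a + x) (a + y) := by
  simpa using hc a 0 x y h

theorem add_left_iff (hc : IsCompat le) (a : G) : le (a + x) (a + y) ↔ le x y :=
  ⟨fun h => by simpa using hc.add_left (-a) h, hc.add_left a⟩

theorem add_add_iff (hc : IsCompat le) (a b : G) : le (a + x + b) (a + y + b) ↔ le x y :=
  ⟨fun h => by simpa [add_assoc] using hc (-a) (-b) _ _ h, hc a b x y⟩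

theorem lt_iff (hc : IsCompat le) (a b : G) : Lt le (a + x + b) (a + y + b) ↔ Lt le x y := by
  simp only [Lt, hc.add_add_iff]

theorem predLe (hc : IsCompat le) : IsCompat (PredLe le) := by
  intro a b x y h z hz
  obtain ⟨w, rfl⟩ : ∃ w, z = a + w + b := ⟨-a + z + -b, by simp [add_assoc]⟩
  rw [hc.lt_iff] at hz ⊢
  exact h w hz

end IsCompat

section TotalPreorder

variable {Q : G → G → Prop} (hrefl : ∀ x, Q x x) (htrans : ∀ x y z, Q x y → Q y z → Q x z)
  (hc : IsCompat Q)

def zeroClass : AddSubgroup G where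
  carrier := {g | Q 0 g ∧ Q g 0}
  zero_mem' := ⟨hrefl 0, hrefl 0⟩
  add_mem' {a b} ha hb :=
    ⟨htrans _ _ _ ha.1 (by simpa using hc.add_left a hb.1),
      htrans _ _ _ (by simpa using hc.add_left a hb.2) ha.2⟩
  neg_mem' {a} ha := ⟨by simpa using hc.add_left (-a) ha.2, by simpa using hc.add_left (-a) ha.1⟩

theorem zeroClass_normal : (zeroClass hrefl htrans hc).Normal where
  conj_mem n hn g :=
    ⟨by simpa using hc g (-g) 0 n hn.1, by simpa using hc g (-g) n 0 hn.2⟩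

theorem mk_eq_mk_iff_zeroClass {x y : G} :
    (x : G ⧸ zeroClass hrefl htrans hc) = y ↔ Q x y ∧ Q y x := by
  rw [QuotientAddGroup.eq]
  change Q 0 (-x + y) ∧ Q (-x + y) 0 ↔ _
  rw [← hc.add_left_iff x (x := 0), ← hc.add_left_iff x (y := 0)]
  simp

def QuotientLe : G ⧸ zeroClass hrefl htrans hc → G ⧸ zeroClass hrefl htrans hc → Prop :=
  Quotient.lift₂ Q fun x₁ y₁ x₂ y₂ hx hy => by
    obtain ⟨hx₁₂, hx₂₁⟩ := (mk_eq_mk_iff_zeroClass hrefl htrans hc).1 (Quotient.sound hx)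
    obtain ⟨hy₁₂, hy₂₁⟩ := (mk_eq_mk_iff_zeroClass hrefl htrans hc).1 (Quotient.sound hy)
    exact propext ⟨fun h => htrans _ _ _ hx₂₁ (htrans _ _ _ h hy₁₂),
      fun h => htrans _ _ _ hx₁₂ (htrans _ _ _ h hy₂₁)⟩

end TotalPreorder

theorem hasTotallyOrderableProperQuotient_of_totalPreorder {Q : G → G → Prop}
    (htrans : ∀ x y z, Q x y → Q y z → Q x z) (htot : IsTotalRel Q) (hc : IsCompat Q)
    {x₀ y₀ : G} (hyx₀ : ¬ Q y₀ x₀) : HasTotallyOrderableProperQuotient G := by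
  have hrefl (x : G) : Q x x := (htot x x).elim id id
  have hN := zeroClass_normal hrefl htrans hc
  refine ⟨zeroClass hrefl htrans hc, hN, fun htop => ?_, QuotientLe hrefl htrans hc,
    ⟨?_, ?_, ?_⟩, ?_, ?_⟩
  · have hxy₀ : (x₀ : G ⧸ zeroClass hrefl htrans hc) = y₀ :=
      QuotientAddGroup.eq.2 (htop ▸ AddSubgroup.mem_top _)
    exact hyx₀ ((mk_eq_mk_iff_zeroClass hrefl htrans hc).1 hxy₀).2
  · rintro ⟨x⟩
    exact hrefl x
  · rintro ⟨x⟩ ⟨y⟩ ⟨z⟩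
    exact htrans x y z
  · rintro ⟨x⟩ ⟨y⟩ hxy hyx
    exact (mk_eq_mk_iff_zeroClass hrefl htrans hc).2 ⟨hxy, hyx⟩
  · rintro ⟨x⟩ ⟨y⟩
    exact htot x y
  · rintro ⟨a⟩ ⟨b⟩ ⟨x⟩ ⟨y⟩
    exact hc a b x y

variable {r : K → K → Prop}

theorem isCompat_reflGen_preimage_lt (hc : IsCompat r) (f : G →+ K) :
    IsCompat (ReflGen (f ⁻¹'o Lt r)) := by
  rintro a b x y (_ | hxy)
  · exact .refl
  · refine .single ?_
    change Lt r (f (a + x + b)) (f (a + y + b))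
    simpa only [map_add] using (hc.lt_iff (f a) (f b)).2 hxy

theorem hasCompatWeakOrder_of_addMonoidHom (hr : IsPartialOrderRel r) (htot : IsTotalRel r)
    (hc : IsCompat r) (f : G →+ K) {g : G} (hg : f g ≠ 0) : HasCompatWeakOrder G := by
  refine ⟨ReflGen (f ⁻¹'o Lt r), isPartialOrderRel_reflGen (fun _ h => h.ne rfl)
    (fun _ _ _ => hr.lt_trans), isCompat_reflGen_preimage_lt hc f,
    not_embeds1p2_reflGen_preimage_lt hr htot f, ?_⟩
  have hg0 : g ≠ 0 := by
    rintro rfl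
    exact hg (map_zero f)
  rcases hr.lt_or_eq_or_lt htot (f g) (f 0) with h | h | h
  · exact ⟨g, 0, hg0, .single h⟩
  · exact (hg (h.trans (map_zero f))).elim
  · exact ⟨0, g, hg0.symm, .single h⟩

theorem HasCompatWeakOrder.hasCompatSemiorder : HasCompatWeakOrder G → HasCompatSemiorder G :=
  fun ⟨le, hpo, hc, h12, hne⟩ =>
    ⟨le, hpo, hc, fun h => h12 h.embeds1p2, fun h => h12 h.embeds1p2, hne⟩

theorem HasCompatSemiorder.hasTotallyOrderableProperQuotient :
    HasCompatSemiorder G → HasTotallyOrderableProperQuotient G :=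
  fun ⟨_, hpo, hc, h22, _, _, _, hne, hle⟩ =>
    hasTotallyOrderableProperQuotient_of_totalPreorder predLe_trans (predLe_total hpo h22)
      hc.predLe (not_predLe_of_lt (hpo.lt_of_le_of_ne hle hne))

theorem HasTotallyOrderableProperQuotient.hasCompatWeakOrder :
    HasTotallyOrderableProperQuotient G → HasCompatWeakOrder G := by
  rintro ⟨H, hN, hH, r, hr, htot, hc⟩
  obtain ⟨g, hg⟩ : ∃ g, g ∉ H := by
    by_contra! h
    exact hH ((AddSubgroup.eq_top_iff' H).2 h)
  exact hasCompatWeakOrder_of_addMonoidHom hr htot hc (QuotientAddGroup.mk' H)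
    (by simpa using hg)

end Group

/-- For a group `G` the following are equivalent: (i) `G` carries a
compatible semiorder distinct from equality; (ii) `G` carries a compatible weak order
distinct from equality; (iii) `G` has a proper normal subgroup `H` such that `G/H`
admits a compatible total order. -/
theorem exists_semiorder_iff_exists_totally_orderable_quotient (G : Type*) [AddGroup G] :
    ((∃ le : G → G → Prop, IsPartialOrderRel le ∧ IsCompat le ∧
        ¬ Embeds2p2 le ∧ ¬ Embeds3p1 le ∧ ∃ x y : G, x ≠ y ∧ le x y) ↔
      (∃ le : G → G → Prop, IsPartialOrderRel le ∧ IsCompat le ∧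
        ¬ Embeds1p2 le ∧ ∃ x y : G, x ≠ y ∧ le x y)) ∧
    ((∃ le : G → G → Prop, IsPartialOrderRel le ∧ IsCompat le ∧
        ¬ Embeds2p2 le ∧ ¬ Embeds3p1 le ∧ ∃ x y : G, x ≠ y ∧ le x y) ↔
      (∃ (H : AddSubgroup G) (hN : H.Normal), H ≠ ⊤ ∧
        ∃ r : G ⧸ H → G ⧸ H → Prop,
          IsPartialOrderRel r ∧ IsTotalRel r ∧
          @IsCompat (G ⧸ H) (@QuotientAddGroup.Quotient.addGroup G _ H hN) r)) :=
  have semi_quot : HasCompatSemiorder G → HasTotallyOrderableProperQuotient G :=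
    HasCompatSemiorder.hasTotallyOrderableProperQuotient
  have quot_weak : HasTotallyOrderableProperQuotient G → HasCompatWeakOrder G :=
    HasTotallyOrderableProperQuotient.hasCompatWeakOrder
  have weak_semi : HasCompatWeakOrder G → HasCompatSemiorder G :=
    HasCompatWeakOrder.hasCompatSemiorder
  ⟨⟨fun h => quot_weak (semi_quot h), weak_semi⟩, ⟨semi_quot, fun h => weak_semi (quot_weak h)⟩⟩

end ThrPaper
end

section
/- Let G = (X, +, ≤) be a threshold group whose threshold is attained. Then the order ≤ has dimension at most 3: there exist three total orders on X, each extending ≤, whose intersection is ≤ (i.e., x ≤ y if and only if x is below y in each of the three total orders). -/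
/-!
The order is recovered from the total order `≤_pred`, which is compatible with the group
operation on both sides: if `m` is the least positive element, then
`x ≤ y ↔ x = y ∨ x + m ≤_pred y`, and `m` is central because its conjugates are positive as well.
Cut `G` into cosets of the convex subgroup generated by `m`. Elements of different cosets compare
like their coset representatives, while inside a coset every element is uniquely
`rep + k • m + r` with `0 ≤ r < m`. This identifies the coset with a subset of `ℤ ×ₗ G`, ordered
by `p ≤ q ↔ p = q ∨ (p.1 + 1, p.2) ≤ q`, and that order is the intersection of the lexicographic
orders on `(⌊k/2⌋, r, k)`, on `(⌊(k+1)/2⌋, r, k)` and on `(k, r reversed)`.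
-/

namespace ThrPaper

universe u

variable {X : Type*}

def IsLinearExtension (le t : X → X → Prop) : Prop :=
  IsPartialOrderRel t ∧ IsTotalRel t ∧ ∀ x y, le x y → t x y

def OrderDimLeThree (le : X → X → Prop) : Prop :=
  ∃ t₁ t₂ t₃ : X → X → Prop, IsLinearExtension le t₁ ∧ IsLinearExtension le t₂ ∧
    IsLinearExtension le t₃ ∧ ∀ x y, le x y ↔ (t₁ x y ∧ t₂ x y ∧ t₃ x y)

lemma isLinearExtension_of_injective {β : Type*} [LinearOrder β] {le : X → X → Prop}
    {f : X → β} (hf : Function.Injective f) (hle : ∀ x y, le x y → f x ≤ f y) :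
    IsLinearExtension le (fun x y => f x ≤ f y) :=
  ⟨⟨fun _ => le_rfl, fun _ _ _ => le_trans, fun _ _ h₁ h₂ => hf (le_antisymm h₁ h₂)⟩,
    fun x y => le_total (f x) (f y), hle⟩

lemma orderDimLeThree_of_injective {β₁ β₂ β₃ : Type*} [LinearOrder β₁] [LinearOrder β₂]
    [LinearOrder β₃] {le : X → X → Prop} {f₁ : X → β₁} {f₂ : X → β₂} {f₃ : X → β₃}
    (hf₁ : Function.Injective f₁) (hf₂ : Function.Injective f₂) (hf₃ : Function.Injective f₃)
    (hle : ∀ x y, le x y ↔ (f₁ x ≤ f₁ y ∧ f₂ x ≤ f₂ y ∧ f₃ x ≤ f₃ y)) :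
    OrderDimLeThree le :=
  ⟨_, _, _, isLinearExtension_of_injective hf₁ fun x y h => ((hle x y).1 h).1,
    isLinearExtension_of_injective hf₂ fun x y h => ((hle x y).1 h).2.1,
    isLinearExtension_of_injective hf₃ fun x y h => ((hle x y).1 h).2.2, hle⟩

section Staircase

variable {R : Type u}

def shiftRel [LinearOrder R] (p q : ℤ × R) : Prop := p = q ∨ toLex (p.1 + 1, p.2) ≤ toLex q

def blockKey (b : ℤ) (p : ℤ × R) : ℤ ×ₗ R ×ₗ ℤ := toLex ((p.1 + b) / 2, toLex (p.2, p.1))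

def flipKey (p : ℤ × R) : ℤ ×ₗ Rᵒᵈ := toLex (p.1, OrderDual.toDual p.2)

lemma blockKey_injective (b : ℤ) : Function.Injective (blockKey (R := R) b) := by
  rintro ⟨k, r⟩ ⟨k', r'⟩ h
  simp_all [blockKey]

lemma flipKey_injective : Function.Injective (flipKey (R := R)) := by
  rintro ⟨k, r⟩ ⟨k', r'⟩ h
  simp_all [flipKey]

-- If `k' = k + 1`, one of the two block keys puts `k` and `k'` into the same block,
-- where it compares `r` with `r'`.
lemma shiftRel_iff_keys [LinearOrder R] (p q : ℤ × R) :
    shiftRel p q ↔ blockKey 0 p ≤ blockKey 0 q ∧ blockKey 1 p ≤ blockKey 1 q ∧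
      flipKey p ≤ flipKey q := by
  obtain ⟨k, r⟩ := p
  obtain ⟨k', r'⟩ := q
  simp only [shiftRel, blockKey, flipKey, Prod.Lex.toLex_le_toLex, Prod.mk.injEq,
    OrderDual.toDual_le_toDual, add_zero]
  rcases lt_trichotomy r r' with h | rfl | h
  · simp only [h, h.le, h.ne, h.not_ge, and_true, and_false, false_and, or_false, false_or]
    constructor <;> omega
  · simp only [le_refl, lt_self_iff_false, and_true, true_and, false_or]
    constructor <;> omega
  · simp only [h.le, h.ne', h.not_gt, h.not_ge, and_true, and_false, false_and, or_false,
      false_or, or_self]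
    constructor <;> omega

lemma orderDimLeThree_of_lex_shiftRel {Q : Type*} [LinearOrder Q] [LinearOrder R]
    {le : X → X → Prop} {c : X → Q} {p : X → ℤ × R}
    (hinj : Function.Injective fun x => (c x, p x))
    (hle : ∀ x y, le x y ↔ c x < c y ∨ (c x = c y ∧ shiftRel (p x) (p y))) :
    OrderDimLeThree le := by
  have key_injective {β : Type u} {f : ℤ × R → β} (hf : Function.Injective f) :
      Function.Injective fun x => toLex (c x, f (p x)) := fun x y h => by
    simp only [toLex_inj, Prod.mk.injEq] at h
    exact hinj (Prod.ext h.1 (hf h.2))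
  refine orderDimLeThree_of_injective (key_injective (blockKey_injective 0))
    (key_injective (blockKey_injective 1)) (key_injective flipKey_injective) fun x y => ?_
  simp only [hle, shiftRel_iff_keys, Prod.Lex.toLex_le_toLex]
  rcases lt_trichotomy (c x) (c y) with h | h | h
  · simp [h, h.ne]
  · simp [h]
  · simp [h.ne', h.not_gt]

end Staircase

section BiOrderedGroup

variable {G : Type*} [AddGroup G] [LinearOrder G] [AddLeftMono G]

lemma zsmul_strictMono_of_pos {m : G} (hm : 0 < m) : StrictMono fun k : ℤ => k • m :=
  strictMono_int_of_lt_succ fun k => by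
    simpa only [add_zsmul, one_zsmul] using lt_add_of_pos_right (k • m) hm

lemma zsmul_add_le_zsmul_add_iff {m r r' : G} (hm : 0 < m) (hr : 0 ≤ r ∧ r < m)
    (hr' : 0 ≤ r' ∧ r' < m) {j j' : ℤ} :
    j • m + r ≤ j' • m + r' ↔ toLex (j, r) ≤ toLex (j', r') := by
  have hmono : StrictMonoOn (fun p : ℤ ×ₗ G => (ofLex p).1 • m + (ofLex p).2)
      {p | 0 ≤ (ofLex p).2 ∧ (ofLex p).2 < m} := by
    rintro ⟨i, s⟩ ⟨-, hs⟩ ⟨i', s'⟩ ⟨hs', -⟩ h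
    rcases Prod.Lex.toLex_lt_toLex.1 h with hi | ⟨rfl, hss⟩
    · calc i • m + s < i • m + m := add_lt_add_right hs _
        _ = (i + 1) • m := by rw [add_zsmul, one_zsmul]
        _ ≤ i' • m := (zsmul_strictMono_of_pos hm).monotone (by omega)
        _ ≤ i' • m + s' := le_add_of_nonneg_right hs'
    · exact add_lt_add_right hss _
  exact hmono.le_iff_le (a := toLex (j, r)) (b := toLex (j', r')) hr hr'

variable [AddRightMono G]

def convexSpan (m : G) : AddSubgroup G where
  carrier := {h | ∃ n : ℕ, -(n • m) ≤ h ∧ h ≤ n • m}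
  zero_mem' := ⟨0, by simp⟩
  add_mem' := by
    rintro a b ⟨n, ha₁, ha₂⟩ ⟨n', hb₁, hb₂⟩
    refine ⟨n + n', ?_, ?_⟩
    · calc -((n + n') • m) = -(n • m) + -(n' • m) := by rw [add_comm n, add_nsmul, neg_add_rev]
        _ ≤ a + b := add_le_add ha₁ hb₁
    · calc a + b ≤ n • m + n' • m := add_le_add ha₂ hb₂
        _ = (n + n') • m := (add_nsmul m n n').symm
  neg_mem' := by
    rintro a ⟨n, h₁, h₂⟩
    exact ⟨n, neg_le_neg_iff.2 h₂, by simpa using neg_le_neg_iff.2 h₁⟩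

lemma exists_zsmul_add_of_mem_convexSpan {m h : G} (hm : 0 < m) (hh : h ∈ convexSpan m) :
    ∃ (k : ℤ) (r : G), h = k • m + r ∧ 0 ≤ r ∧ r < m := by
  obtain ⟨n, hn₁, hn₂⟩ := hh
  have hmono := zsmul_strictMono_of_pos hm
  obtain ⟨k, hk, hmax⟩ := Int.exists_greatest_of_bdd (P := fun k : ℤ => k • m ≤ h)
    ⟨n, fun k hk => hmono.le_iff_le.1 (by simpa using hk.trans hn₂)⟩
    ⟨-n, by simpa using hn₁⟩
  refine ⟨k, -(k • m) + h, by simp, le_neg_add_iff_add_le.2 (by simpa using hk),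
    neg_add_lt_iff_lt_add.2 (lt_of_not_ge fun h' => ?_)⟩
  simpa using hmax (k + 1) (by simpa [add_zsmul] using h')

noncomputable def cosetRep (m x : G) : G := (QuotientAddGroup.mk x : G ⧸ convexSpan m).out

lemma neg_cosetRep_add_mem (m x : G) : -cosetRep m x + x ∈ convexSpan m :=
  QuotientAddGroup.eq.1 (QuotientAddGroup.out_eq' _)

lemma cosetRep_eq_cosetRep_iff {m x y : G} :
    cosetRep m x = cosetRep m y ↔ -x + y ∈ convexSpan m :=
  Quotient.out_inj.trans QuotientAddGroup.eq

lemma add_nsmul_lt_of_cosetRep_ne {m x y : G} (hm : 0 ≤ m) (hxy : x < y)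
    (hne : cosetRep m x ≠ cosetRep m y) (n : ℕ) : x + n • m < y := by
  refine lt_of_not_ge fun hle => hne (cosetRep_eq_cosetRep_iff.2 ⟨n, ?_, ?_⟩)
  · exact (neg_nonpos.2 (nsmul_nonneg hm n)).trans (le_neg_add_iff_add_le.2 (by simpa using hxy.le))
  · exact neg_add_le_iff_le_add.2 hle

lemma cosetRep_lt_cosetRep {m x y : G} (hm : 0 ≤ m) (hxy : x < y)
    (hne : cosetRep m x ≠ cosetRep m y) : cosetRep m x < cosetRep m y := by
  obtain ⟨n, hn, -⟩ := neg_cosetRep_add_mem m x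
  obtain ⟨n', -, hn'⟩ := neg_cosetRep_add_mem m y
  have hx : cosetRep m x ≤ x + n • m := add_neg_le_iff_le_add.1 (le_neg_add_iff_add_le.1 hn)
  have hy : y ≤ cosetRep m y + n' • m := neg_add_le_iff_le_add.1 hn'
  have hgap : x + n • m + n' • m < cosetRep m y + n' • m := by
    simpa only [add_assoc, ← add_nsmul] using (add_nsmul_lt_of_cosetRep_ne hm hxy hne _).trans_le hy
  exact hx.trans_lt (lt_of_add_lt_add_right hgap)

lemma eq_or_add_le_iff_of_cosetRep_ne {m x y : G} (hm : 0 < m)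
    (hne : cosetRep m x ≠ cosetRep m y) : x = y ∨ x + m ≤ y ↔ cosetRep m x < cosetRep m y := by
  constructor
  · rintro (rfl | h)
    · exact absurd rfl hne
    · exact cosetRep_lt_cosetRep hm.le ((lt_add_of_pos_right x hm).trans_le h) hne
  · intro h
    right
    rcases lt_trichotomy x y with hlt | rfl | hgt
    · simpa using (add_nsmul_lt_of_cosetRep_ne hm.le hlt hne 1).le
    · exact absurd rfl hne
    · exact absurd h (cosetRep_lt_cosetRep hm.le hgt (Ne.symm hne)).not_gt

theorem orderDimLeThree_eq_or_add_le {m : G} (hm : 0 < m) (hcomm : ∀ a, AddCommute m a) :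
    OrderDimLeThree fun x y : G => x = y ∨ x + m ≤ y := by
  choose k r hkr using fun x => exists_zsmul_add_of_mem_convexSpan hm (neg_cosetRep_add_mem m x)
  have hdecomp x : x = cosetRep m x + (k x • m + r x) := neg_add_eq_iff_eq_add.1 (hkr x).1
  have hshift x : x + m = cosetRep m x + ((k x + 1) • m + r x) := by
    conv_lhs => rw [hdecomp x]
    rw [add_zsmul, one_zsmul, add_assoc, add_assoc, add_assoc, (hcomm (r x)).eq]
  refine orderDimLeThree_of_lex_shiftRel (c := cosetRep m) (p := fun x => (k x, r x)) ?_ ?_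
  · intro x y h
    simp only [Prod.mk.injEq] at h
    rw [hdecomp x, hdecomp y, h.1, h.2.1, h.2.2]
  · intro x y
    by_cases hc : cosetRep m x = cosetRep m y
    · simp only [hc, lt_irrefl, false_or, true_and, shiftRel, Prod.mk.injEq]
      refine or_congr ⟨?_, ?_⟩ ?_
      · rintro rfl
        exact ⟨rfl, rfl⟩
      · rintro ⟨hk, hr⟩
        rw [hdecomp x, hdecomp y, hc, hk, hr]
      · conv_lhs => rw [hshift x, hdecomp y, hc, add_le_add_iff_left]
        exact zsmul_add_le_zsmul_add_iff hm (hkr x).2 (hkr y).2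
    · simpa only [hc, false_and, or_false] using eq_or_add_le_iff_of_cosetRep_ne hm hc

end BiOrderedGroup

section Threshold

variable {le : X → X → Prop}

noncomputable abbrev thresholdLinearOrder (hth : IsThresholdOrder le) : LinearOrder X where
  le := PredLe le
  le_refl _ _ := id
  le_trans _ _ _ h₁ h₂ z hz := h₂ z (h₁ z hz)
  le_antisymm := hth.2.2
  le_total := hth.2.1
  toDecidableLE := Classical.decRel _

lemma predLe_of_le (htrans : ∀ x y z, le x y → le y z → le x z) {x y : X} (h : le x y) :
    PredLe le x y :=
  fun _ hz => ⟨htrans _ _ _ hz.1 h, fun hyz => hz.2 (htrans _ _ _ h hyz)⟩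

end Threshold

namespace IsCompat

variable {G : Type*} [AddGroup G] {le : G → G → Prop}

lemma le_add_add_iff (hc : IsCompat le) {a b x y : G} :
    le (a + x + b) (a + y + b) ↔ le x y :=
  ⟨fun h => by simpa [add_assoc] using hc (-a) (-b) _ _ h, hc a b x y⟩

lemma lt_add_add_iff (hc : IsCompat le) {a b x y : G} :
    Lt le (a + x + b) (a + y + b) ↔ Lt le x y := by
  simp only [Lt, hc.le_add_add_iff]

lemma predLe_add_add (hc : IsCompat le) {x y : G} (a b : G) (h : PredLe le x y) :
    PredLe le (a + x + b) (a + y + b) := fun z hz => by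
  have hz' : Lt le (-a + z + -b) x := by
    simpa [add_assoc] using (hc.lt_add_add_iff (a := -a) (b := -b)).2 hz
  simpa [add_assoc] using (hc.lt_add_add_iff (a := a) (b := b)).2 (h _ hz')

lemma predLe_add_add_iff (hc : IsCompat le) {a b x y : G} :
    PredLe le (a + x + b) (a + y + b) ↔ PredLe le x y :=
  ⟨fun h => by simpa [add_assoc] using hc.predLe_add_add (-a) (-b) h, hc.predLe_add_add a b⟩

lemma le_iff_eq_or_predLe_add (hc : IsCompat le) (hpo : IsPartialOrderRel le) {m : G}
    (hm : Lt le 0 m) (hmin : ∀ x, Lt le 0 x → PredLe le m x) (x y : G) :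
    le x y ↔ x = y ∨ PredLe le (x + m) y := by
  have hlt : Lt le x y ↔ PredLe le (x + m) y := by
    have h₁ := hc.lt_add_add_iff (a := -x) (b := 0) (x := x) (y := y)
    have h₂ := hc.predLe_add_add_iff (a := x) (b := 0) (x := m) (y := -x + y)
    simp only [neg_add_cancel, add_zero, add_neg_cancel_left] at h₁ h₂
    rw [← h₁, h₂]
    exact ⟨hmin _, fun h => h 0 hm⟩
  rw [← hlt]
  constructor
  · intro h
    by_cases hyx : le y x
    · exact Or.inl (hpo.2.2 _ _ h hyx)
    · exact Or.inr ⟨h, hyx⟩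
  · rintro (rfl | h)
    · exact hpo.1 x
    · exact h.1

-- Conjugates of `m` are again positive, so minimality forces them to equal `m`.
lemma addCommute_of_minimal_pos (hc : IsCompat le) (hth : IsThresholdOrder le) {m : G}
    (hm : Lt le 0 m) (hmin : ∀ x, Lt le 0 x → PredLe le m x) (a : G) : AddCommute m a := by
  have hconj (b : G) : PredLe le m (b + m + -b) :=
    hmin _ (by simpa using (hc.lt_add_add_iff (a := b) (b := -b)).2 hm)
  have hle : PredLe le (a + m + -a) m := by
    simpa [add_assoc] using hc.predLe_add_add a (-a) (hconj (-a))
  exact (add_neg_eq_iff_eq_add.1 (hth.2.2 _ _ hle (hconj a))).symm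

end IsCompat

/-- A threshold group with attained threshold has order dimension at
most 3: there are three total orders extending the order whose intersection is the order. -/
theorem thresholdGroup_dimension_le_three {G : Type*} [AddGroup G] (le : G → G → Prop)
    (hpo : IsPartialOrderRel le) (hc : IsCompat le) (hth : IsThresholdOrder le)
    (hatt : ∃ m : G, Lt le 0 m ∧ ∀ x : G, Lt le 0 x → PredLe le m x) :
    ∃ t1 t2 t3 : G → G → Prop,
      (IsPartialOrderRel t1 ∧ IsTotalRel t1 ∧ ∀ x y : G, le x y → t1 x y) ∧
      (IsPartialOrderRel t2 ∧ IsTotalRel t2 ∧ ∀ x y : G, le x y → t2 x y) ∧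
      (IsPartialOrderRel t3 ∧ IsTotalRel t3 ∧ ∀ x y : G, le x y → t3 x y) ∧
      ∀ x y : G, le x y ↔ (t1 x y ∧ t2 x y ∧ t3 x y) := by
  obtain ⟨m, hm, hmin⟩ := hatt
  let : LinearOrder G := thresholdLinearOrder hth
  have : AddLeftMono G := ⟨fun a x y h =>
    (by simpa only [add_zero] using hc.predLe_add_add a 0 h : PredLe le (a + x) (a + y))⟩
  have : AddRightMono G := ⟨fun b x y h =>
    (by simpa only [zero_add] using hc.predLe_add_add 0 b h : PredLe le (x + b) (y + b))⟩
  have hm₀ : (0 : G) < m := ⟨predLe_of_le hpo.2.1 hm.1, fun h => (h 0 hm).2 (h 0 hm).1⟩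
  have hle : le = fun x y => x = y ∨ x + m ≤ y :=
    funext₂ fun x y => propext (hc.le_iff_eq_or_predLe_add hpo hm hmin x y)
  rw [hle]
  exact orderDimLeThree_eq_or_add_le hm₀ (hc.addCommute_of_minimal_pos hth hm hmin)

end ThrPaper
end
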